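/- (Odd part of the Laguerre-to-Hermite expansion.) For every positive integer m, -2mx · ₂F₃(-(m-1), (1-2m)/2; 3/2, 1, 3/2; x²/4) = Σ_{k=0}^{m-1} ((-2m)_{2k+1} / (2^{2k+1} ((2k+1)!)²)) · ₂F₂((2k+1-2m)/2, (2k+2-2m)/2; (2k+3)/2, (2k+2)/2; 1/4) · H_{2k+1}(x), where the ₂F₂ series terminate. -/

import Mathlib

/-!
By the Pochhammer duplication formula `(2a)_{2n} = 4ⁿ (a)_n (a+1/2)_n`, the left side is
`∑_{s<m} c_s x^{2s+1}` with `c_s = (-2m)_{2s+1} / ((2s+1)!)²`, the odd Taylor coefficients of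
`₁F₁(-2m; 1; x)`. Each odd power expands as
`x^{2s+1} = ∑_{k+j=s} (2s+1)! / (2^{2s+1} (2k+1)! j!) H_{2k+1}(x)`: the numbers
`H_{2k+1}(x) / (2k+1)!` are the coefficients of `e^{-t}` times the odd part of `e^{2xt}`, and
`e^{-t} e^{t} = 1`. Collecting the coefficient of `H_{2k+1}` leaves a terminating series in `j`,
which duplication turns into the `₂F₂(…; 1/4)`.
-/
open Finset

/-- Pochhammer (rising factorial) symbol on the reals. -/
noncomputable def poch (a : ℝ) (n : ℕ) : ℝ := ∏ i ∈ Finset.range n, (a + i)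

/-- Physicists' Hermite polynomial. -/
noncomputable def hermiteP (N : ℕ) (x : ℝ) : ℝ :=
  (N.factorial : ℝ) * ∑ k ∈ Finset.range (N / 2 + 1),
    (-1 : ℝ) ^ k * (2 * x) ^ (N - 2 * k) / ((k.factorial : ℝ) * ((N - 2 * k).factorial : ℝ))

open Nat PowerSeries

lemma poch_add (a : ℝ) (n l : ℕ) : poch a (n + l) = poch a n * poch (a + n) l := by
  simp only [poch, prod_range_add, Nat.cast_add, add_assoc]

lemma poch_pos {a : ℝ} (ha : 0 < a) (n : ℕ) : 0 < poch a n :=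
  prod_pos fun i _ => by positivity

lemma poch_one_eq_factorial (n : ℕ) : poch 1 n = n ! := by
  rw [← prod_range_add_one_eq_factorial, poch]
  push_cast
  simp only [add_comm]

lemma poch_two_mul (a : ℝ) (n : ℕ) :
    poch (2 * a) (2 * n) = 4 ^ n * poch a n * poch (a + 1 / 2) n := by
  induction n with
  | zero => simp [poch]
  | succ n ih =>
    simp only [mul_add_one, poch, prod_range_succ] at ih ⊢
    rw [ih]
    push_cast
    ring

lemma poch_add_two_mul (a : ℝ) (n j : ℕ) :
    poch a (n + 2 * j) = poch a n * (4 ^ j * poch ((a + n) / 2) j * poch ((a + n + 1) / 2) j) := by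
  have h := poch_two_mul ((a + n) / 2) j
  rw [mul_div_cancel₀ _ two_ne_zero, ← add_div] at h
  rw [poch_add, h]

lemma cast_factorial_add_two_mul (n j : ℕ) :
    ((n + 2 * j)! : ℝ) = n ! * (4 ^ j * poch ((n + 1) / 2) j * poch ((n + 2) / 2) j) := by
  rw [← poch_one_eq_factorial, poch_add_two_mul, poch_one_eq_factorial]
  ring_nf

noncomputable def oddHermiteCoeff (k j : ℕ) : ℝ :=
  (2 * (k + j) + 1)! / (2 ^ (2 * (k + j) + 1) * (2 * k + 1)! * j !)

lemma hermiteP_odd_div_factorial_series (x : ℝ) :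
    mk (fun k => hermiteP (2 * k + 1) x / (2 * k + 1)!) =
      evalNegHom (exp ℝ) * mk (fun r => (2 * x) ^ (2 * r + 1) / (2 * r + 1)!) := by
  ext k
  rw [coeff_mul, Nat.sum_antidiagonal_eq_sum_range_succ
    (fun l r => coeff l (evalNegHom (exp ℝ)) * coeff r (mk _)), coeff_mk, hermiteP,
    show (2 * k + 1) / 2 + 1 = k + 1 by omega, mul_div_cancel_left₀ _ (by positivity)]
  refine sum_congr rfl fun l hl => ?_
  rw [show 2 * k + 1 - 2 * l = 2 * (k - l) + 1 by grind]
  simp only [evalNegHom, coeff_rescale, coeff_exp, one_div, map_inv₀, map_natCast, coeff_mk]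
  ring

lemma pow_odd_eq_sum_antidiagonal_hermiteP (x : ℝ) (s : ℕ) :
    x ^ (2 * s + 1) =
      ∑ p ∈ antidiagonal s, oddHermiteCoeff p.1 p.2 * hermiteP (2 * p.1 + 1) x := by
  have hseries : mk (fun k => hermiteP (2 * k + 1) x / (2 * k + 1)!) * exp ℝ =
      mk (fun r => (2 * x) ^ (2 * r + 1) / (2 * r + 1)!) := by
    rw [hermiteP_odd_div_factorial_series, mul_comm, ← mul_assoc, exp_mul_exp_neg_eq_one, one_mul]
  have hcoeff := congrArg (coeff s) hseries
  simp only [coeff_mul, coeff_mk, coeff_exp, map_div₀, map_one, map_natCast] at hcoeff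
  calc x ^ (2 * s + 1)
        = (2 * s + 1)! / 2 ^ (2 * s + 1) * ((2 * x) ^ (2 * s + 1) / (2 * s + 1)!) := by
        field_simp; ring
    _ = _ := by
        rw [← hcoeff, mul_sum]
        refine sum_congr rfl fun p hp => ?_
        rw [oddHermiteCoeff, mem_antidiagonal.mp hp]
        field_simp

lemma sum_mul_pow_odd_eq_sum_hermiteP (c : ℕ → ℝ) (n : ℕ) (x : ℝ) :
    ∑ s ∈ range n, c s * x ^ (2 * s + 1) =
      ∑ k ∈ range n, ∑ j ∈ range (n - k),
        c (k + j) * oddHermiteCoeff k j * hermiteP (2 * k + 1) x := by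
  rw [← sum_range_diag_flip]
  refine sum_congr rfl fun s _ => ?_
  rw [pow_odd_eq_sum_antidiagonal_hermiteP, mul_sum, ← Nat.sum_antidiagonal_eq_sum_range_succ
    (fun k j => c (k + j) * oddHermiteCoeff k j * hermiteP (2 * k + 1) x)]
  refine sum_congr rfl fun p hp => ?_
  rw [← mem_antidiagonal.mp hp]
  ring

/-- The coefficient of `xⁿ` in `₁F₁(b; 1; x)`. -/
noncomputable def kummerCoeff (b : ℝ) (n : ℕ) : ℝ := poch b n / (n ! : ℝ) ^ 2

lemma kummerCoeff_odd_mul_pow (a : ℝ) (s : ℕ) (x : ℝ) :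
    kummerCoeff (-2 * a) (2 * s + 1) * x ^ (2 * s + 1) =
      -2 * a * x * (poch (-(a - 1)) s * poch ((1 - 2 * a) / 2) s * (x ^ 2 / 4) ^ s /
        (poch (3 / 2) s * poch 1 s * poch (3 / 2) s * s !)) := by
  have hpoch : poch (-2 * a) (2 * s + 1) =
      -2 * a * (4 ^ s * poch ((1 - 2 * a) / 2) s * poch (-(a - 1)) s) := by
    rw [add_comm, poch_add_two_mul, show poch (-2 * a) 1 = -2 * a by simp [poch]]
    ring_nf
  have hfact : ((2 * s + 1)! : ℝ) = 4 ^ s * s ! * poch (3 / 2) s := by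
    rw [add_comm, cast_factorial_add_two_mul]
    norm_num [poch_one_eq_factorial]
  have hpos : 0 < poch (3 / 2) s := poch_pos (by norm_num) s
  rw [kummerCoeff, hpoch, hfact, poch_one_eq_factorial]
  simp only [div_pow, show (4 : ℝ) = 2 ^ 2 by norm_num, ← pow_mul]
  field_simp
  ring

lemma kummerCoeff_mul_oddHermiteCoeff (a : ℝ) (k j : ℕ) :
    kummerCoeff (-2 * a) (2 * (k + j) + 1) * oddHermiteCoeff k j =
      poch (-2 * a) (2 * k + 1) / (2 ^ (2 * k + 1) * ((2 * k + 1)! : ℝ) ^ 2) *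
        (poch ((2 * (k : ℝ) + 1 - 2 * a) / 2) j * poch ((2 * (k : ℝ) + 2 - 2 * a) / 2) j *
            (1 / 4 : ℝ) ^ j /
          (poch ((2 * (k : ℝ) + 3) / 2) j * poch ((2 * (k : ℝ) + 2) / 2) j * j !)) := by
  have hsplit : 2 * (k + j) + 1 = (2 * k + 1) + 2 * j := by ring
  have hpoch := poch_add_two_mul (-2 * a) (2 * k + 1) j
  have hfact := cast_factorial_add_two_mul (2 * k + 1) j
  push_cast at hpoch hfact
  rw [show (-2 * a + (2 * k + 1)) / 2 = (2 * (k : ℝ) + 1 - 2 * a) / 2 by ring,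
    show (-2 * a + (2 * k + 1) + 1) / 2 = (2 * (k : ℝ) + 2 - 2 * a) / 2 by ring] at hpoch
  rw [show (2 * (k : ℝ) + 1 + 1) / 2 = (2 * k + 2) / 2 by ring,
    show (2 * (k : ℝ) + 1 + 2) / 2 = (2 * k + 3) / 2 by ring] at hfact
  have h1 : 0 < poch ((2 * (k : ℝ) + 3) / 2) j := poch_pos (by positivity) j
  have h2 : 0 < poch ((2 * (k : ℝ) + 2) / 2) j := poch_pos (by positivity) j
  rw [kummerCoeff, oddHermiteCoeff, hsplit, hpoch, hfact]
  simp only [div_pow, show (4 : ℝ) = 2 ^ 2 by norm_num, ← pow_mul]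
  field_simp
  ring

theorem odd_part_laguerre_to_hermite_general (m : ℕ) (x : ℝ) :
    (-2 * (m : ℝ) * x *
      ∑ s ∈ Finset.range m,
        poch (-((m : ℝ) - 1)) s * poch ((1 - 2 * (m : ℝ)) / 2) s * (x ^ 2 / 4) ^ s /
          (poch (3 / 2) s * poch 1 s * poch (3 / 2) s * (s.factorial : ℝ))) =
      ∑ k ∈ Finset.range m,
        (poch (-2 * (m : ℝ)) (2 * k + 1) / (2 ^ (2 * k + 1) * (((2 * k + 1).factorial : ℝ)) ^ 2)) *
        (∑ j ∈ Finset.range (m - k),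
          poch ((2 * (k : ℝ) + 1 - 2 * m) / 2) j * poch ((2 * (k : ℝ) + 2 - 2 * m) / 2) j *
            (1 / 4 : ℝ) ^ j /
          (poch ((2 * (k : ℝ) + 3) / 2) j * poch ((2 * (k : ℝ) + 2) / 2) j * (j.factorial : ℝ))) *
        hermiteP (2 * k + 1) x := by
  calc _ = ∑ s ∈ range m, kummerCoeff (-2 * m) (2 * s + 1) * x ^ (2 * s + 1) := by
        rw [mul_sum]
        exact sum_congr rfl fun s _ => (kummerCoeff_odd_mul_pow m s x).symm
    _ = _ := by
        rw [sum_mul_pow_odd_eq_sum_hermiteP]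
        refine sum_congr rfl fun k _ => ?_
        rw [mul_sum, sum_mul]
        exact sum_congr rfl fun j _ => by rw [kummerCoeff_mul_oddHermiteCoeff]

/-- Odd part of the Laguerre-to-Hermite expansion. -/
theorem odd_part_laguerre_to_hermite (m : ℕ) (hm : 0 < m) (x : ℝ) :
    (-2 * (m : ℝ) * x *
      ∑ s ∈ Finset.range m,
        poch (-((m : ℝ) - 1)) s * poch ((1 - 2 * (m : ℝ)) / 2) s * (x ^ 2 / 4) ^ s /
          (poch (3 / 2) s * poch 1 s * poch (3 / 2) s * (s.factorial : ℝ))) =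
      ∑ k ∈ Finset.range m,
        (poch (-2 * (m : ℝ)) (2 * k + 1) / (2 ^ (2 * k + 1) * (((2 * k + 1).factorial : ℝ)) ^ 2)) *
        (∑ j ∈ Finset.range (m - k),
          poch ((2 * (k : ℝ) + 1 - 2 * m) / 2) j * poch ((2 * (k : ℝ) + 2 - 2 * m) / 2) j *
            (1 / 4 : ℝ) ^ j /
          (poch ((2 * (k : ℝ) + 3) / 2) j * poch ((2 * (k : ℝ) + 2) / 2) j * (j.factorial : ℝ))) *
        hermiteP (2 * k + 1) x :=
  odd_part_laguerre_to_hermite_general m x
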